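/- arXiv:math/9410219 — 2 statements merged into one kernel-verified Lean document; each statement's English description precedes it below -/
import Mathlib

section
/- The space of pairs (p,q) of coprime complex polynomials with p monic of degree d and deg q < d (equivalently, Hol*_d(S²,S²)) is path-connected for every d ≥ 1. -/
open Polynomial

/-- The monic polynomial `X^d + ∑ aᵢ Xⁱ` determined by its `d` non-leading coefficients. -/
noncomputable def monicOfCoeffs (d : ℕ) (a : Fin d → ℂ) : Polynomial ℂ :=
  X ^ d + ∑ i : Fin d, C (a i) * X ^ (i : ℕ)

/-- The polynomial `∑ bᵢ Xⁱ` of degree `< d` determined by its coefficients. -/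
noncomputable def polyOfCoeffs {d : ℕ} (b : Fin d → ℂ) : Polynomial ℂ :=
  ∑ i : Fin d, C (b i) * X ^ (i : ℕ)

/-!
For a monic `p` of degree `d` and `deg q < d`, coprimality of `(p, q)` is the non-vanishing
of the resultant `Res_{d,d}(p, q)`, a polynomial in the coefficients. Along the complex line
through two coprime pairs this resultant is a polynomial in the line parameter `t` that is
nonzero at `t = 0`, so only finitely many points of the line are missed; the complement of a
finite set in `ℂ` is path-connected, which joins the two pairs inside the set.
-/

open AffineMap

theorem isPathConnected_of_countable_setOf_lineMap_notMem {E : Type*} [AddCommGroup E]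
    [Module ℂ E] [TopologicalSpace E] [IsTopologicalAddGroup E] [ContinuousSMul ℂ E]
    {S : Set E} (hS : S.Nonempty)
    (h : ∀ x ∈ S, ∀ y ∈ S, {t : ℂ | lineMap x y t ∉ S}.Countable) :
    IsPathConnected S := by
  refine isPathConnected_iff.2 ⟨hS, fun x hx y hy => ?_⟩
  have hT : IsPathConnected {t : ℂ | lineMap x y t ∉ S}ᶜ :=
    (h x hx y hy).isPathConnected_compl_of_one_lt_rank (by simp [Complex.rank_real_complex])
  have h01 := hT.joinedIn 0 (by simpa using hx) 1 (by simpa using hy)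
  simpa using (h01.map lineMap_continuous).mono (by rintro _ ⟨t, ht, rfl⟩; simpa using ht)

namespace Polynomial

theorem exists_eval_eq_resultant_lineMap {R : Type*} [CommRing R] (f₀ f₁ g₀ g₁ : R[X])
    (m n : ℕ) :
    ∃ r : R[X], ∀ t : R, r.eval t = resultant (lineMap f₀ f₁ t) (lineMap g₀ g₁ t) m n := by
  -- the line `t ↦ lineMap f₀ f₁ t`, as a single polynomial over `R[X]` specialised at `X = t`
  let line : R[X] → R[X] → R[X][X] := fun f₀ f₁ => C (1 - X) * f₀.map C + C X * f₁.map C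
  have map_line : ∀ f₀ f₁ t, (line f₀ f₁).map (evalRingHom t) = lineMap f₀ f₁ t := by
    intro f₀ f₁ t
    have hid : (evalRingHom t).comp C = RingHom.id R := by ext; simp
    simp [line, lineMap_apply_module, Polynomial.map_map, hid, smul_eq_C_mul]
  refine ⟨resultant (line f₀ f₁) (line g₀ g₁) m n, fun t => ?_⟩
  rw [← map_line, ← map_line, resultant_map_map, coe_evalRingHom]

theorem Monic.resultant_ne_zero_iff {K : Type*} [Field K] {f g : K[X]} {n : ℕ}
    (hf : f.Monic) (hg : g.natDegree ≤ n) :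
    resultant f g f.natDegree n ≠ 0 ↔ IsCoprime f g := by
  obtain ⟨k, rfl⟩ := Nat.exists_eq_add_of_le hg
  rw [resultant_add_right_deg _ _ _ _ _ le_rfl, hf.coeff_natDegree, one_pow, one_mul, Ne,
    resultant_eq_zero_iff]
  simp [hf.ne_zero]

end Polynomial

section Coeffs

variable {d : ℕ}

theorem degree_polyOfCoeffs_lt (b : Fin d → ℂ) : (polyOfCoeffs b).degree < d :=
  degree_sum_fin_lt b

theorem monic_monicOfCoeffs (a : Fin d → ℂ) : (monicOfCoeffs d a).Monic :=
  monic_X_pow_add (degree_polyOfCoeffs_lt a)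

theorem natDegree_monicOfCoeffs (a : Fin d → ℂ) : (monicOfCoeffs d a).natDegree = d := by
  rw [monicOfCoeffs, natDegree_add_eq_left_of_degree_lt, natDegree_X_pow]
  simpa using degree_sum_fin_lt a

theorem polyOfCoeffs_single_zero (hd : 0 < d) : polyOfCoeffs (Pi.single ⟨0, hd⟩ 1) = 1 := by
  simp [polyOfCoeffs, Pi.single_apply]

theorem polyOfCoeffs_lineMap (a b : Fin d → ℂ) (t : ℂ) :
    polyOfCoeffs (lineMap a b t) = lineMap (polyOfCoeffs a) (polyOfCoeffs b) t := by
  simp [polyOfCoeffs, lineMap_apply_module, Finset.smul_sum, Finset.sum_add_distrib,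
    smul_eq_C_mul, add_mul, mul_assoc]

theorem monicOfCoeffs_lineMap (a b : Fin d → ℂ) (t : ℂ) :
    monicOfCoeffs d (lineMap a b t) = lineMap (monicOfCoeffs d a) (monicOfCoeffs d b) t := by
  change X ^ d + polyOfCoeffs _ = lineMap (X ^ d + polyOfCoeffs a) (X ^ d + polyOfCoeffs b) t
  rw [polyOfCoeffs_lineMap, lineMap_apply_module, lineMap_apply_module]
  module

theorem isCoprime_monicOfCoeffs_iff_resultant_ne_zero (a b : Fin d → ℂ) :
    IsCoprime (monicOfCoeffs d a) (polyOfCoeffs b) ↔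
      resultant (monicOfCoeffs d a) (polyOfCoeffs b) d d ≠ 0 := by
  have := (monic_monicOfCoeffs a).resultant_ne_zero_iff
    (natDegree_le_of_degree_le (degree_polyOfCoeffs_lt b).le)
  rw [natDegree_monicOfCoeffs] at this
  exact this.symm

end Coeffs

/-- the space of pairs `(p,q)` of coprime complex polynomials with `p` monic
of degree `d` and `deg q < d` (i.e. `Hol*_d(S²,S²)`), topologized as a subspace of
`ℂ^{2d}` via coefficients, is path-connected for every `d ≥ 1`. -/
theorem coprimePairs_isPathConnected (d : ℕ) (hd : 1 ≤ d) :
    IsPathConnected {x : (Fin d → ℂ) × (Fin d → ℂ) |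
      IsCoprime (monicOfCoeffs d x.1) (polyOfCoeffs x.2)} := by
  refine isPathConnected_of_countable_setOf_lineMap_notMem ⟨(0, Pi.single ⟨0, hd⟩ 1), ?_⟩ ?_
  · simp [polyOfCoeffs_single_zero, isCoprime_one_right]
  intro x hx y hy
  obtain ⟨r, hr⟩ := exists_eval_eq_resultant_lineMap (monicOfCoeffs d x.1) (monicOfCoeffs d y.1)
    (polyOfCoeffs x.2) (polyOfCoeffs y.2) d d
  have hr0 : r ≠ 0 := by
    rintro rfl
    have h0 := hr 0
    rw [lineMap_apply_zero, lineMap_apply_zero, eval_zero] at h0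
    exact (isCoprime_monicOfCoeffs_iff_resultant_ne_zero x.1 x.2).1 hx h0.symm
  refine (finite_setOfPred_isRoot hr0).countable.mono fun t ht => ?_
  simp only [Set.mem_ofPred_eq, isCoprime_monicOfCoeffs_iff_resultant_ne_zero, not_not] at ht
  rwa [fst_lineMap, snd_lineMap, monicOfCoeffs_lineMap, polyOfCoeffs_lineMap, ← hr] at ht
end

section
/- For coprime polynomials (p,q) with p monic of degree d and deg q < d, and for any finite set S ⊂ ℂ, there exists w ∈ ℂ such that the d roots of p − wq are distinct and disjoint from S; in particular, a generic value of the rational map p/q has exactly d distinct preimages in ℂ. -/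
open Polynomial

/-!
If `z` is a multiple root of `p - w q`, then `p(z) = w q(z)` and `p'(z) = w q'(z)`, so `z` is a
root of the Wronskian `p q' - p' q`, which is nonzero by coprimality as soon as `deg p ≥ 1`.
Coprimality also forces `q(z) ≠ 0` at every root `z` of `p - w q`, so that `w = p(z) / q(z)`.
Hence any `w` outside the finite set of values of `p / q` at the roots of the Wronskian and at
the points of `S` works; `p - w q` is monic of degree `d` because `deg q < d`.
-/

namespace Polynomial

section CommRing

variable {R : Type*} [CommRing R]

theorem degree_C_mul_le (a : R) (p : R[X]) : (C a * p).degree ≤ p.degree := by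
  rw [← smul_eq_C_mul]
  exact degree_smul_le a p

theorem wronskian_sub_C_mul_left (p q : R[X]) (w : R) :
    wronskian (p - C w * q) q = wronskian p q := by
  simp only [wronskian, derivative_sub, derivative_C_mul]
  ring

theorem IsRoot.wronskian_of_isRoot_derivative {f : R[X]} {z : R} (hf : f.IsRoot z)
    (hf' : (derivative f).IsRoot z) (g : R[X]) : (wronskian f g).IsRoot z := by
  simp_all [wronskian]

theorem nodup_roots_of_forall_isRoot_not_isRoot_derivative [IsDomain R] {f : R[X]}
    (h : ∀ z, f.IsRoot z → ¬(derivative f).IsRoot z) : f.roots.Nodup := by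
  classical
  rcases eq_or_ne f 0 with rfl | hf
  · simp
  refine Multiset.nodup_iff_count_le_one.mpr fun z => ?_
  rw [count_roots]
  by_contra! hmult
  obtain ⟨hz, hz'⟩ := (one_lt_rootMultiplicity_iff_isRoot hf).mp hmult
  exact h z hz hz'

end CommRing

section Field

variable {K : Type*} [Field K]

theorem wronskian_ne_zero_of_isCoprime [CharZero K] {p q : K[X]} (hco : IsCoprime p q)
    (hp : p.natDegree ≠ 0) : wronskian p q ≠ 0 := by
  rw [Ne, hco.wronskian_eq_zero_iff, derivative_eq_zero]
  exact fun h => hp h.1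

theorem eval_div_eval_eq_of_isRoot_sub_C_mul {p q : K[X]} (hco : IsCoprime p q) {w z : K}
    (hz : (p - C w * q).IsRoot z) : p.eval z / q.eval z = w := by
  have hpz : p.eval z = w * q.eval z := by simpa [sub_eq_zero] using hz
  have hqz : q.eval z ≠ 0 := by
    intro hqz
    have := hco.map (evalRingHom z)
    simp_all
  rw [hpz, mul_div_cancel_right₀ _ hqz]

end Field

end Polynomial

/-- for coprime `(p,q)` with `p` monic of degree `d` and `deg q < d`, and
any finite set `S ⊂ ℂ`, there is a value `w ∈ ℂ` such that `p - w·q` has `d` distinct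
roots, all avoiding `S`: a generic value of the rational map `p/q` has exactly `d`
distinct preimages in `ℂ`. -/
theorem generic_value_d_distinct_preimages (d : ℕ) (p q : Polynomial ℂ)
    (hp : p.Monic) (hd : p.natDegree = d) (hq : q.degree < (d : ℕ)) (hco : IsCoprime p q)
    (S : Finset ℂ) :
    ∃ w : ℂ, (p - C w * q).roots.Nodup ∧ Multiset.card (p - C w * q).roots = d ∧
      ∀ z ∈ S, (p - C w * q).eval z ≠ 0 := by
  classical
  set T := (wronskian p q).roots.toFinset ∪ S
  obtain ⟨w, hw⟩ := Infinite.exists_notMem_finset (T.image fun z => p.eval z / q.eval z)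
  have hT : ∀ z ∈ T, ¬(p - C w * q).IsRoot z := fun z hzT hz =>
    hw (Finset.mem_image.mpr ⟨z, hzT, eval_div_eval_eq_of_isRoot_sub_C_mul hco hz⟩)
  have hlt : (C w * q).degree < p.degree :=
    (degree_C_mul_le w q).trans_lt (by rwa [degree_eq_natDegree hp.ne_zero, hd])
  have hmonic : (p - C w * q).Monic := hp.sub_of_left hlt
  have hdeg : (p - C w * q).natDegree = p.natDegree :=
    natDegree_eq_of_degree_eq (degree_sub_eq_left_of_degree_lt hlt)
  refine ⟨w, nodup_roots_of_forall_isRoot_not_isRoot_derivative fun z hz hz' => ?_,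
    IsAlgClosed.card_roots_eq_natDegree.trans (hdeg.trans hd),
    fun z hzS => hT z (Finset.mem_union_right _ hzS)⟩
  have hp0 : p.natDegree ≠ 0 := by
    rw [← hdeg]
    exact (natDegree_pos_iff_degree_pos.mpr (degree_pos_of_root hmonic.ne_zero hz)).ne'
  refine hT z (Finset.mem_union_left _ ?_) hz
  rw [Multiset.mem_toFinset, mem_roots (wronskian_ne_zero_of_isCoprime hco hp0),
    ← wronskian_sub_C_mul_left p q w]
  exact hz.wronskian_of_isRoot_derivative hz' q
end
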